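/- Let G be a graph containing two non-adjacent vertices u, v each adjacent to every other vertex of G (N(u) = V(G)\{u,v}, N(v) = V(G)\{u,v}), and let H_l = ILAT_l(G) for l ≥ 1 with u'₁, v'₁ the anticlones of u, v at step 1. Then every vertex of H_l has an even number (0, 2, or 4) of elements of {u, v, u'₁, v'₁} in its closed neighborhood, and consequently V(H_l) \ {u, v, u'₁, v'₁} is a failed zero forcing set of H_l, so FZ(ILAT_l(G)) ≥ |V(ILAT_l(G))| − 4. -/

import Mathlib

variable {V : Type*}

/-- Zero forcing closure: vertices eventually forced starting from `S`. -/
inductive ZFClos (G : SimpleGraph V) (S : Set V) : V → Prop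
  | mem (v : V) : v ∈ S → ZFClos G S v
  | force (u v : V) : ZFClos G S u → G.Adj u v →
      (∀ w, G.Adj u w → w ≠ v → ZFClos G S w) → ZFClos G S v

/-- `S` is a zero forcing set of `G`. -/
def IsZFSet (G : SimpleGraph V) (S : Set V) : Prop := ∀ v, ZFClos G S v

/-- `S` is a failed zero forcing set of `G`. -/
def IsFailedZFSet (G : SimpleGraph V) (S : Set V) : Prop := ¬ IsZFSet G S

/-- The zero forcing number `Z(G)`. -/
noncomputable def zfNumber (G : SimpleGraph V) [Fintype V] : ℕ :=
  sInf {n | ∃ S : Finset V, S.card = n ∧ IsZFSet G ↑S}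

/-- The failed zero forcing number `FZ(G)`. -/
noncomputable def fzNumber (G : SimpleGraph V) [Fintype V] : ℕ :=
  sSup {n | ∃ S : Finset V, S.card = n ∧ IsFailedZFSet G ↑S}

/-- Loop zero forcing closure. -/
inductive LZFClos (G : SimpleGraph V) (S : Set V) : V → Prop
  | mem (v : V) : v ∈ S → LZFClos G S v
  | force (u v : V) : LZFClos G S u → G.Adj u v →
      (∀ w, G.Adj u w → w ≠ v → LZFClos G S w) → LZFClos G S v
  | loop (v : V) : (∀ w, G.Adj v w → LZFClos G S w) → LZFClos G S v

/-- One ILT step: simultaneously clone every vertex.  The clone of `b` is `Sum.inr b`,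
adjacent to the closed neighborhood of `b`; clones form an independent set. -/
def iltStep (G : SimpleGraph V) : SimpleGraph (V ⊕ V) where
  Adj x y :=
    match x, y with
    | Sum.inl a, Sum.inl b => G.Adj a b
    | Sum.inl a, Sum.inr b => a = b ∨ G.Adj a b
    | Sum.inr a, Sum.inl b => b = a ∨ G.Adj b a
    | Sum.inr _, Sum.inr _ => False
  symm := by
    constructor
    rintro (a | a) (b | b) h
    · exact G.adj_symm h
    · exact h
    · exact h
    · exact h.elim
  loopless := by
    constructor
    rintro (a | a) h
    · exact G.ne_of_adj h rfl
    · exact h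

/-- One ILAT step: simultaneously anticlone every vertex.  The anticlone of `b` is
`Sum.inr b`, adjacent to the complement of the closed neighborhood of `b`. -/
def ilatStep (G : SimpleGraph V) : SimpleGraph (V ⊕ V) where
  Adj x y :=
    match x, y with
    | Sum.inl a, Sum.inl b => G.Adj a b
    | Sum.inl a, Sum.inr b => a ≠ b ∧ ¬ G.Adj a b
    | Sum.inr a, Sum.inl b => b ≠ a ∧ ¬ G.Adj b a
    | Sum.inr _, Sum.inr _ => False
  symm := by
    constructor
    rintro (a | a) (b | b) h
    · exact G.adj_symm h
    · exact h
    · exact h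
    · exact h.elim
  loopless := by
    constructor
    rintro (a | a) h
    · exact G.ne_of_adj h rfl
    · exact h

/-- One IIM step: each vertex `b` is cloned if `c b = true` and anticloned otherwise. -/
def iimStep (G : SimpleGraph V) (c : V → Bool) : SimpleGraph (V ⊕ V) where
  Adj x y :=
    match x, y with
    | Sum.inl a, Sum.inl b => G.Adj a b
    | Sum.inl a, Sum.inr b => if c b then a = b ∨ G.Adj a b else a ≠ b ∧ ¬ G.Adj a b
    | Sum.inr a, Sum.inl b => if c a then b = a ∨ G.Adj b a else b ≠ a ∧ ¬ G.Adj b a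
    | Sum.inr _, Sum.inr _ => False
  symm := by
    constructor
    rintro (a | a) (b | b) h
    · exact G.adj_symm h
    · exact h
    · exact h
    · exact h.elim
  loopless := by
    constructor
    rintro (a | a) h
    · exact G.ne_of_adj h rfl
    · exact h

/-- Adding a single clone of the vertex `v` (the new vertex is `none`). -/
def cloneOne (G : SimpleGraph V) (v : V) : SimpleGraph (Option V) where
  Adj x y :=
    match x, y with
    | some a, some b => G.Adj a b
    | some a, none => a = v ∨ G.Adj a v
    | none, some b => b = v ∨ G.Adj b v
    | none, none => False
  symm := by
    constructor
    rintro (_ | a) (_ | b) h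
    · exact h.elim
    · exact h
    · exact h
    · exact G.adj_symm h
  loopless := by
    constructor
    rintro (_ | a) h
    · exact h
    · exact G.ne_of_adj h rfl

/-- The vertex type after `l` doubling steps. -/
def IterV (V : Type*) : ℕ → Type _
  | 0 => V
  | l + 1 => IterV V l ⊕ IterV V l

instance iterVFintype [Fintype V] : ∀ l, Fintype (IterV V l)
  | 0 => ‹Fintype V›
  | l + 1 =>
    haveI : Fintype (IterV V l) := iterVFintype l
    inferInstanceAs (Fintype (IterV V l ⊕ IterV V l))

/-- `ILT_l(G)`. -/
def iltIter (G : SimpleGraph V) : ∀ l, SimpleGraph (IterV V l)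
  | 0 => G
  | l + 1 => iltStep (iltIter G l)

/-- `ILAT_l(G)`. -/
def ilatIter (G : SimpleGraph V) : ∀ l, SimpleGraph (IterV V l)
  | 0 => G
  | l + 1 => ilatStep (ilatIter G l)

/-- Iterated Independent Model: at step `n+1`, vertex `b` of the current graph is cloned
if `c n b = true` and anticloned otherwise. -/
def iimIter (G : SimpleGraph V) (c : ∀ n, IterV V n → Bool) : ∀ l, SimpleGraph (IterV V l)
  | 0 => G
  | l + 1 => iimStep (iimIter G c l) (c l)

/-- The level (time step of creation) of a vertex; level 0 is the base graph. -/
def iterLevel : ∀ {l}, IterV V l → ℕ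
  | 0, _ => 0
  | _ + 1, Sum.inl x => iterLevel x
  | l + 1, Sum.inr _ => l + 1

/-- The unique ancestor in the base graph of a vertex of an iterated graph. -/
def iterProj : ∀ {l}, IterV V l → V
  | 0, v => v
  | _ + 1, Sum.inl x => iterProj x
  | _ + 1, Sum.inr x => iterProj x

/-- The copy of a base vertex `v` (level 0) inside `IterV V l`. -/
def iterInj0 : ∀ l, V → IterV V l
  | 0, v => v
  | l + 1, v => Sum.inl (iterInj0 l v)

/-- The level-1 clone/anticlone of a base vertex `v`, viewed inside `IterV V (l+1)`. -/
def iterInj1 : ∀ l, V → IterV V (l + 1)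
  | 0, v => Sum.inr v
  | l + 1, v => Sum.inl (iterInj1 l v)

/-- The set of burned vertices after `t` burning steps, with sources `s 0, s 1, …`:
at each step the fire spreads to all neighbors of burned vertices and a new source burns. -/
def burnSet (G : SimpleGraph V) (s : ℕ → V) : ℕ → Set V
  | 0 => ∅
  | t + 1 => insert (s t) (burnSet G s t ∪ {v | ∃ u ∈ burnSet G s t, G.Adj u v})

/-- `G` can be fully burned in `k` steps. -/
def BurnsIn (G : SimpleGraph V) (k : ℕ) : Prop :=
  ∃ s : ℕ → V, burnSet G s k = Set.univ

/-- `G` can be fully burned in `k` steps with the final source superfluous: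
the fire spread alone covers everything at step `k`. -/
def BurnsInStar (G : SimpleGraph V) (k : ℕ) : Prop :=
  ∃ s : ℕ → V,
    (burnSet G s (k - 1) ∪ {v | ∃ u ∈ burnSet G s (k - 1), G.Adj u v}) = Set.univ

/-- The burning number `b(G)`. -/
noncomputable def burningNumber (G : SimpleGraph V) : ℕ := sInf {k | BurnsIn G k}

/-- The burning number `b*(G)` with superfluous final source. -/
noncomputable def burningNumberStar (G : SimpleGraph V) : ℕ := sInf {k | BurnsInStar G k}

/-!
Anticloning complements closed neighbourhoods: the anticlone `b'` of `b` meets the previous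
vertex set exactly in the complement of `N[b]`, while an old vertex keeps its old closed
neighbourhood there. Hence a set `T` of even size meeting every closed neighbourhood in an even
number of vertices keeps this property when it is viewed one step later. At step 1 the four
vertices `u, v, u'₁, v'₁` have it: every old closed neighbourhood contains exactly one of `x`
and `x'₁`, and `N[b'₁]` meets the four in `{b'₁} ∩ {u'₁, v'₁}` together with `{u, v} \ N[b]`,
which is even because every vertex has zero or two neighbours among `u, v`. A vertex with an even
number of unforced vertices in its closed neighbourhood never has exactly one unforced neighbour,
so nothing among the four is ever forced.
-/

open Set Function

namespace SimpleGraph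

def closedNbhd (G : SimpleGraph V) (a : V) : Set V := insert a (G.neighborSet a)

@[simp]
lemma mem_closedNbhd {G : SimpleGraph V} {a b : V} : b ∈ G.closedNbhd a ↔ b = a ∨ G.Adj a b :=
  Iff.rfl

def ClosedNbhdsMeetEvenly (G : SimpleGraph V) (T : Set V) : Prop :=
  ∀ a, Even (G.closedNbhd a ∩ T).ncard

end SimpleGraph

open SimpleGraph

theorem ZFClos.notMem_of_ncard_ne_one {G : SimpleGraph V} {S : Set V}
    (hS : ∀ a, (G.closedNbhd a ∩ S).ncard ≠ 1) {w : V} (hw : ZFClos G (univ \ S) w) :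
    w ∉ S := by
  induction hw with
  | mem x hx => exact hx.2
  | force a b _ hab _ ha hothers =>
    intro hb
    refine hS a (ncard_eq_one.2 ⟨b, ?_⟩)
    ext x
    simp only [mem_inter_iff, mem_closedNbhd, mem_singleton_iff]
    constructor
    · rintro ⟨rfl | hax, hxS⟩
      · exact absurd hxS ha
      · by_contra hxb
        exact hothers x hax hxb hxS
    · rintro rfl
      exact ⟨Or.inr hab, hb⟩

theorem isFailedZFSet_compl_of_ncard_ne_one {G : SimpleGraph V} {S : Set V} (hne : S.Nonempty)
    (hS : ∀ a, (G.closedNbhd a ∩ S).ncard ≠ 1) : IsFailedZFSet G (univ \ S) :=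
  fun hZF => hne.elim fun w hw => (hZF w).notMem_of_ncard_ne_one hS hw

theorem card_sub_ncard_le_fzNumber [Fintype V] {G : SimpleGraph V} {S : Set V}
    (hS : IsFailedZFSet G (univ \ S)) : Fintype.card V - S.ncard ≤ fzNumber G := by
  classical
  refine le_csSup ⟨Fintype.card V, ?_⟩ ⟨S.toFinsetᶜ, ?_, ?_⟩
  · rintro n ⟨T, rfl, -⟩
    exact T.card_le_univ
  · rw [Finset.card_compl, ncard_eq_toFinset_card']
  · simpa [compl_eq_univ_sdiff] using hS

lemma Set.ncard_inter_image_of_injective {α β : Type*} {f : α → β} (hf : Injective f)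
    (t : Set β) (s : Set α) : (t ∩ f '' s).ncard = (f ⁻¹' t ∩ s).ncard := by
  rw [← image_preimage_inter, ncard_image_of_injective _ hf]

lemma Set.ncard_compl_inter_add_ncard_inter {α : Type*} (s : Set α) {t : Set α}
    (ht : t.Finite) : (sᶜ ∩ t).ncard + (s ∩ t).ncard = t.ncard := by
  rw [← sdiff_eq_compl_inter, inter_comm, add_comm, ncard_inter_add_ncard_sdiff_eq_ncard t s ht]

section ilatStep

variable (G : SimpleGraph V) (b : V)

lemma inl_preimage_closedNbhd_ilatStep_inl :
    Sum.inl ⁻¹' (ilatStep G).closedNbhd (.inl b) = G.closedNbhd b := by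
  ext x
  simp [ilatStep]

lemma inr_preimage_closedNbhd_ilatStep_inl :
    Sum.inr ⁻¹' (ilatStep G).closedNbhd (.inl b) = (G.closedNbhd b)ᶜ := by
  ext x
  simp [ilatStep, eq_comm]

lemma inl_preimage_closedNbhd_ilatStep_inr :
    Sum.inl ⁻¹' (ilatStep G).closedNbhd (.inr b) = (G.closedNbhd b)ᶜ := by
  ext x
  simp [ilatStep, G.adj_comm]

lemma inr_preimage_closedNbhd_ilatStep_inr :
    Sum.inr ⁻¹' (ilatStep G).closedNbhd (.inr b) = {b} := by
  ext x
  simp [ilatStep]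

end ilatStep

namespace SimpleGraph.ClosedNbhdsMeetEvenly

variable {G : SimpleGraph V} {T : Set V}

theorem ilatStep_image_inl (hT : T.Finite) (hTeven : Even T.ncard)
    (h : G.ClosedNbhdsMeetEvenly T) : (ilatStep G).ClosedNbhdsMeetEvenly (Sum.inl '' T) := by
  rintro (b | b)
  · rw [ncard_inter_image_of_injective Sum.inl_injective, inl_preimage_closedNbhd_ilatStep_inl]
    exact h b
  · rw [ncard_inter_image_of_injective Sum.inl_injective, inl_preimage_closedNbhd_ilatStep_inr]
    have hsplit := ncard_compl_inter_add_ncard_inter (G.closedNbhd b) hT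
    rw [← hsplit, Nat.even_add] at hTeven
    exact hTeven.2 (h b)

end SimpleGraph.ClosedNbhdsMeetEvenly

theorem closedNbhdsMeetEvenly_ilatStep_image_inl_union_image_inr {G : SimpleGraph V}
    {T : Set V} (hT : T.Finite) (hTeven : Even T.ncard)
    (h : ∀ b, Even (G.neighborSet b ∩ T).ncard) :
    (ilatStep G).ClosedNbhdsMeetEvenly (Sum.inl '' T ∪ Sum.inr '' T) := by
  intro a
  rw [inter_union_distrib_left, ncard_union_eq
      (disjoint_image_inl_image_inr.mono inter_subset_right inter_subset_right)
      ((hT.image _).inter_of_right _) ((hT.image _).inter_of_right _),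
    ncard_inter_image_of_injective Sum.inl_injective,
    ncard_inter_image_of_injective Sum.inr_injective]
  have hsplit := fun b => ncard_compl_inter_add_ncard_inter (G.closedNbhd b) hT
  rcases a with b | b
  · rw [inl_preimage_closedNbhd_ilatStep_inl, inr_preimage_closedNbhd_ilatStep_inl, add_comm,
      hsplit]
    exact hTeven
  · rw [inl_preimage_closedNbhd_ilatStep_inr, inr_preimage_closedNbhd_ilatStep_inr]
    have hclosed :
        (G.closedNbhd b ∩ T).ncard = ({b} ∩ T).ncard + (G.neighborSet b ∩ T).ncard := by
      rw [closedNbhd, insert_eq, union_inter_distrib_right, ncard_union_eq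
        ((disjoint_singleton_left.2 (G.notMem_neighborSet_self)).mono inter_subset_left
          inter_subset_left) (hT.inter_of_right _) (hT.inter_of_right _)]
    have hTb := hsplit b
    have hNb := Nat.even_iff.1 (h b)
    rw [Nat.even_iff] at hTeven ⊢
    omega

/-- `{u, v, u'₁, v'₁}`, built so that each later step is a `Sum.inl` image. -/
def pairWithAnticlones (u v : V) : ∀ l, Set (IterV V (l + 1))
  | 0 => Sum.inl '' {u, v} ∪ Sum.inr '' {u, v}
  | l + 1 => Sum.inl '' pairWithAnticlones u v l

lemma pairWithAnticlones_eq (u v : V) : ∀ l,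
    pairWithAnticlones u v l = {iterInj0 (l + 1) u, iterInj0 (l + 1) v, iterInj1 l u, iterInj1 l v}
  | 0 => by
    change Sum.inl '' {u, v} ∪ Sum.inr '' {u, v} =
      ({Sum.inl u, Sum.inl v, Sum.inr u, Sum.inr v} : Set (V ⊕ V))
    simp only [image_insert_eq, image_singleton, insert_union, singleton_union]
  | l + 1 => by
    change Sum.inl '' pairWithAnticlones u v l = ({Sum.inl (iterInj0 (l + 1) u),
      Sum.inl (iterInj0 (l + 1) v), Sum.inl (iterInj1 l u), Sum.inl (iterInj1 l v)} :
        Set (IterV V (l + 1) ⊕ IterV V (l + 1)))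
    simp only [pairWithAnticlones_eq u v l, image_insert_eq, image_singleton]

lemma even_ncard_neighborSet_inter_pair {G : SimpleGraph V} {u v : V} (hne : u ≠ v)
    (hu : G.neighborSet u = univ \ {u, v}) (hv : G.neighborSet v = univ \ {u, v}) (b : V) :
    Even (G.neighborSet b ∩ {u, v}).ncard := by
  by_cases hb : b ∈ ({u, v} : Set V)
  · obtain rfl | rfl := hb
    · rw [hu, sdiff_inter_self, ncard_empty]
      exact Even.zero
    · rw [hv, sdiff_inter_self, ncard_empty]
      exact Even.zero
  · rw [inter_eq_right.2, ncard_pair hne]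
    · exact even_two
    rintro x (rfl | rfl)
    · rw [mem_neighborSet, adj_comm, ← mem_neighborSet, hu]
      exact ⟨trivial, hb⟩
    · rw [mem_neighborSet, adj_comm, ← mem_neighborSet, hv]
      exact ⟨trivial, hb⟩

theorem ncard_pairWithAnticlones_and_closedNbhdsMeetEvenly {G : SimpleGraph V} {u v : V}
    (hne : u ≠ v) (huv : ∀ b, Even (G.neighborSet b ∩ {u, v}).ncard) :
    ∀ l, (pairWithAnticlones u v l).ncard = 4 ∧
      (ilatIter G (l + 1)).ClosedNbhdsMeetEvenly (pairWithAnticlones u v l)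
  | 0 => by
    have hpair : ({u, v} : Set V).ncard = 2 := ncard_pair hne
    refine ⟨?_, closedNbhdsMeetEvenly_ilatStep_image_inl_union_image_inr
      (toFinite ({u, v} : Set V)) (hpair ▸ even_two) huv⟩
    change (Sum.inl '' {u, v} ∪ Sum.inr '' {u, v} : Set (V ⊕ V)).ncard = 4
    rw [ncard_union_eq disjoint_image_inl_image_inr, ncard_image_of_injective _ Sum.inl_injective,
      ncard_image_of_injective _ Sum.inr_injective, hpair]
  | l + 1 => by
    obtain ⟨hcard, heven⟩ := ncard_pairWithAnticlones_and_closedNbhdsMeetEvenly hne huv l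
    exact ⟨(ncard_image_of_injective _ Sum.inl_injective).trans hcard,
      heven.ilatStep_image_inl (finite_of_ncard_ne_zero (by omega)) (hcard ▸ even_two_mul 2)⟩

/-- for `G` with two non-adjacent mutually dominating vertices `u, v`,
every vertex of `ILAT_l(G)` (`l ≥ 1`) has 0, 2 or 4 of `{u, v, u'₁, v'₁}` in its closed
neighborhood; hence their complement is a failed zero forcing set and `FZ ≥ |V| - 4`. -/
theorem stmt18 [Fintype V] (G : SimpleGraph V) (u v : V) (hne : u ≠ v)
    (hu : G.neighborSet u = Set.univ \ {u, v})
    (hv : G.neighborSet v = Set.univ \ {u, v}) (l : ℕ) :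
    (∀ a : IterV V (l + 1),
        ((insert a ((ilatIter G (l + 1)).neighborSet a)) ∩
          ({iterInj0 (l + 1) u, iterInj0 (l + 1) v, iterInj1 l u, iterInj1 l v} :
            Set (IterV V (l + 1)))).ncard = 0 ∨
        ((insert a ((ilatIter G (l + 1)).neighborSet a)) ∩
          ({iterInj0 (l + 1) u, iterInj0 (l + 1) v, iterInj1 l u, iterInj1 l v} :
            Set (IterV V (l + 1)))).ncard = 2 ∨
        ((insert a ((ilatIter G (l + 1)).neighborSet a)) ∩
          ({iterInj0 (l + 1) u, iterInj0 (l + 1) v, iterInj1 l u, iterInj1 l v} :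
            Set (IterV V (l + 1)))).ncard = 4) ∧
    IsFailedZFSet (ilatIter G (l + 1))
      (Set.univ \
        ({iterInj0 (l + 1) u, iterInj0 (l + 1) v, iterInj1 l u, iterInj1 l v} :
          Set (IterV V (l + 1)))) ∧
    Fintype.card (IterV V (l + 1)) - 4 ≤ fzNumber (ilatIter G (l + 1)) := by
  rw [← pairWithAnticlones_eq]
  obtain ⟨hcard, heven⟩ := ncard_pairWithAnticlones_and_closedNbhdsMeetEvenly hne
    (even_ncard_neighborSet_inter_pair hne hu hv) l
  have hfin : (pairWithAnticlones u v l).Finite := finite_of_ncard_ne_zero (by omega)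
  have hcount (a : IterV V (l + 1)) :
      ((ilatIter G (l + 1)).closedNbhd a ∩ pairWithAnticlones u v l).ncard = 0 ∨
      ((ilatIter G (l + 1)).closedNbhd a ∩ pairWithAnticlones u v l).ncard = 2 ∨
      ((ilatIter G (l + 1)).closedNbhd a ∩ pairWithAnticlones u v l).ncard = 4 := by
    have hle := ncard_le_ncard (inter_subset_right (s := (ilatIter G (l + 1)).closedNbhd a)) hfin
    obtain ⟨k, hk⟩ := heven a
    omega
  have hfailed : IsFailedZFSet (ilatIter G (l + 1)) (univ \ pairWithAnticlones u v l) :=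
    isFailedZFSet_compl_of_ncard_ne_one (nonempty_of_ncard_ne_zero (by omega))
      fun a hone => Nat.not_even_one (hone ▸ heven a)
  exact ⟨hcount, hfailed, hcard ▸ card_sub_ncard_le_fzNumber hfailed⟩
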